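/- arXiv:1301.4986 — 3 statements merged into one kernel-verified Lean document; each statement's English description precedes it below -/
import Mathlib

section
/- Let N ≥ 1, let V : [0,∞) → ℂ^{N×N} be continuous with V(x) Hermitian for every x ≥ 0, let S be an N×N Hermitian complex matrix, let λ ∈ ℝ, and let M : [0,∞) → ℂ^{N×N} be twice continuously differentiable with −M''(x) − V(x)M(x) = −λM(x) for all x ≥ 0, M'(0) = S·M(0), and M(x) invertible for every x ≥ 0. Then F(x) := M'(x)·M(x)^{−1} is Hermitian for every x ≥ 0, and F(0) = S. -/
/-!
The Wronskian `W = Mᴴ M' - M'ᴴ M` has derivative `Mᴴ M'' - M''ᴴ M`, which vanishes because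
`M'' = (λ - V) M` with `λ - V` Hermitian; so `W` is constant, and the Robin condition with `S`
Hermitian gives `W 0 = 0`. Hence `Mᴴ M'` is Hermitian, and so is
`M' M⁻¹ = (M⁻¹)ᴴ (Mᴴ M') M⁻¹`.
-/

open MeasureTheory Set Matrix

/-- Entrywise derivative (within `Ici 0`) of a matrix-valued function on the
half-line. -/
noncomputable def mderiv {N : ℕ} (M : ℝ → Matrix (Fin N) (Fin N) ℂ) :
    ℝ → Matrix (Fin N) (Fin N) ℂ :=
  fun x => Matrix.of fun i j => derivWithin (fun t => M t i j) (Ici 0) x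

-- Any norm induces the entrywise topology; this one makes matrices a normed algebra, so the
-- product rule for derivatives applies to matrix products.
attribute [local instance] Matrix.linftyOpNormedAddCommGroup Matrix.linftyOpNormedSpace
  Matrix.linftyOpNormedRing Matrix.linftyOpNormedAlgebra

namespace Matrix

variable {m n 𝕜 : Type*} [Fintype m] [Fintype n] [DecidableEq m] [DecidableEq n] [RCLike 𝕜]
  {s : Set ℝ} {x : ℝ}

theorem hasDerivWithinAt_iff_apply {M : ℝ → Matrix m n 𝕜} {A : Matrix m n 𝕜} :
    HasDerivWithinAt M A s x ↔ ∀ i j, HasDerivWithinAt (fun t => M t i j) (A i j) s x := by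
  constructor
  · intro h i j
    let L : Matrix m n 𝕜 →L[ℝ] 𝕜 :=
      LinearMap.toContinuousLinearMap (entryLinearMap ℝ 𝕜 i j : Matrix m n 𝕜 →ₗ[ℝ] 𝕜)
    exact L.hasFDerivAt.comp_hasDerivWithinAt x h
  · intro h
    have hsum (B : Matrix m n 𝕜) : ∑ p : m × n, B p.1 p.2 • single p.1 p.2 (1 : 𝕜) = B := by
      simp only [smul_single, smul_eq_mul, mul_one, Fintype.sum_prod_type]
      exact (matrix_eq_sum_single B).symm
    have := HasDerivWithinAt.fun_sum (u := Finset.univ)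
      fun (p : m × n) _ => (h p.1 p.2).smul_const (single p.1 p.2 (1 : 𝕜))
    simp only [hsum] at this
    exact this

theorem _root_.HasDerivWithinAt.matrix_conjTranspose {M : ℝ → Matrix m n 𝕜} {A : Matrix m n 𝕜}
    (h : HasDerivWithinAt M A s x) : HasDerivWithinAt (fun t => (M t)ᴴ) Aᴴ s x :=
  hasDerivWithinAt_iff_apply.2 fun i j => (hasDerivWithinAt_iff_apply.1 h j i).star

section Wronskian

variable {M M' : ℝ → Matrix n n 𝕜}

def wronskian (M M' : ℝ → Matrix n n 𝕜) (t : ℝ) : Matrix n n 𝕜 :=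
  (M t)ᴴ * M' t - (M' t)ᴴ * M t

theorem hasDerivWithinAt_wronskian {B : Matrix n n 𝕜} (hM : HasDerivWithinAt M (M' x) s x)
    (hM' : HasDerivWithinAt M' B s x) :
    HasDerivWithinAt (wronskian M M') ((M x)ᴴ * B - Bᴴ * M x) s x := by
  refine ((hM.matrix_conjTranspose.fun_mul hM').fun_sub
    (hM'.matrix_conjTranspose.fun_mul hM)).congr_deriv ?_
  abel

theorem wronskian_eq_of_hasDerivWithinAt {a : ℝ} {H : ℝ → Matrix n n 𝕜}
    (hM : ∀ x ≥ a, HasDerivWithinAt M (M' x) (Ici a) x)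
    (hM' : ∀ x ≥ a, HasDerivWithinAt M' (H x * M x) (Ici a) x)
    (hH : ∀ x ≥ a, (H x).IsHermitian) :
    ∀ x ≥ a, wronskian M M' x = wronskian M M' a := by
  have hW : ∀ x ≥ a, HasDerivWithinAt (wronskian M M') 0 (Ici a) x := fun x hx => by
    refine (hasDerivWithinAt_wronskian (hM x hx) (hM' x hx)).congr_deriv ?_
    rw [conjTranspose_mul, (hH x hx).eq, Matrix.mul_assoc, sub_self]
  intro x hx
  refine constant_of_has_deriv_right_zero (fun y hy => ?_) (fun y hy => ?_) x ⟨hx, le_rfl⟩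
  · exact (hW y hy.1).continuousWithinAt.mono Icc_subset_Ici_self
  · exact (hW y hy.1).mono (Ici_subset_Ici.2 hy.1)

end Wronskian

theorem isHermitian_mul_inv_of_conjTranspose_mul_eq {A B : Matrix n n 𝕜} (hA : IsUnit A)
    (h : Aᴴ * B = Bᴴ * A) : (B * A⁻¹).IsHermitian := by
  have hAB : (Aᴴ * B).IsHermitian := by
    rw [IsHermitian, conjTranspose_mul, conjTranspose_conjTranspose, h]
  convert isHermitian_conjTranspose_mul_mul A⁻¹ hAB using 1
  rw [← Matrix.mul_assoc A⁻¹ᴴ, ← conjTranspose_mul,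
    mul_nonsing_inv _ ((isUnit_iff_isUnit_det A).1 hA), conjTranspose_one, Matrix.one_mul]

end Matrix

section mderiv

variable {N : ℕ} {M : ℝ → Matrix (Fin N) (Fin N) ℂ}

theorem hasDerivWithinAt_mderiv (hM : ∀ i j, DifferentiableOn ℝ (fun t => M t i j) (Ici 0))
    {x : ℝ} (hx : 0 ≤ x) : HasDerivWithinAt M (mderiv M x) (Ici 0) x :=
  hasDerivWithinAt_iff_apply.2 fun i j => (hM i j x hx).hasDerivWithinAt

theorem differentiableOn_mderiv_apply (hM : ∀ i j, ContDiffOn ℝ 2 (fun t => M t i j) (Ici 0))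
    (i j : Fin N) : DifferentiableOn ℝ (fun t => mderiv M t i j) (Ici 0) :=
  ((hM i j).derivWithin (m := 1) (uniqueDiffOn_Ici 0) (by norm_num)).differentiableOn
    (by norm_num)

end mderiv

theorem stmt_9_general (N : ℕ)
    (V : ℝ → Matrix (Fin N) (Fin N) ℂ)
    (hVherm : ∀ x ≥ (0:ℝ), (V x).IsHermitian)
    (S : Matrix (Fin N) (Fin N) ℂ) (hS : S.IsHermitian)
    (lam : ℝ)
    (M : ℝ → Matrix (Fin N) (Fin N) ℂ)
    (hsmooth : ∀ i j, ContDiffOn ℝ 2 (fun t => M t i j) (Ici 0))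
    (hODE : ∀ x ≥ (0:ℝ),
      -(mderiv (mderiv M) x) - V x * M x = (-lam : ℂ) • M x)
    (hBC : mderiv M 0 = S * M 0)
    (hinv : ∀ x ≥ (0:ℝ), IsUnit (M x)) :
    (∀ x ≥ (0:ℝ), (mderiv M x * (M x)⁻¹).IsHermitian)
    ∧ mderiv M 0 * (M 0)⁻¹ = S := by
  have hM : ∀ x ≥ (0:ℝ), HasDerivWithinAt M (mderiv M x) (Ici 0) x := fun x =>
    hasDerivWithinAt_mderiv fun i j => (hsmooth i j).differentiableOn (by norm_num)
  have hM' : ∀ x ≥ (0:ℝ),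
      HasDerivWithinAt (mderiv M) (((lam : ℂ) • 1 - V x) * M x) (Ici 0) x := fun x hx => by
    have hM'' : mderiv (mderiv M) x = ((lam : ℂ) • 1 - V x) * M x := by
      rw [Matrix.sub_mul, smul_one_mul, ← neg_neg ((lam : ℂ) • M x), ← neg_smul, ← hODE x hx]
      abel
    exact hM'' ▸ hasDerivWithinAt_mderiv (differentiableOn_mderiv_apply hsmooth) hx
  have hH : ∀ x ≥ (0:ℝ), ((lam : ℂ) • 1 - V x).IsHermitian := fun x hx => by
    simp [IsHermitian, (hVherm x hx).eq]
  have hW0 : wronskian M (mderiv M) 0 = 0 := by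
    rw [wronskian, hBC, conjTranspose_mul, hS.eq, Matrix.mul_assoc, sub_self]
  refine ⟨fun x hx => isHermitian_mul_inv_of_conjTranspose_mul_eq (hinv x hx) ?_, ?_⟩
  · exact sub_eq_zero.1 ((wronskian_eq_of_hasDerivWithinAt hM hM' hH x hx).trans hW0)
  · rw [hBC, mul_nonsing_inv_cancel_right _ _ ((isUnit_iff_isUnit_det _).1 (hinv 0 le_rfl))]

theorem stmt_9 (N : ℕ) (hN : 1 ≤ N)
    (V : ℝ → Matrix (Fin N) (Fin N) ℂ)
    (hVcont : ContinuousOn V (Ici 0))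
    (hVherm : ∀ x ≥ (0:ℝ), (V x).IsHermitian)
    (S : Matrix (Fin N) (Fin N) ℂ) (hS : S.IsHermitian)
    (lam : ℝ)
    (M : ℝ → Matrix (Fin N) (Fin N) ℂ)
    (hsmooth : ∀ i j, ContDiffOn ℝ 2 (fun t => M t i j) (Ici 0))
    (hODE : ∀ x ≥ (0:ℝ),
      -(mderiv (mderiv M) x) - V x * M x = (-lam : ℂ) • M x)
    (hBC : mderiv M 0 = S * M 0)
    (hinv : ∀ x ≥ (0:ℝ), IsUnit (M x)) :
    (∀ x ≥ (0:ℝ), (mderiv M x * (M x)⁻¹).IsHermitian)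
    ∧ mderiv M 0 * (M 0)⁻¹ = S :=
  stmt_9_general N V hVherm S hS lam M hsmooth hODE hBC hinv
end

section
/- Let N ≥ 1, λ > 0, b ≥ 0, let F_b be an N×N Hermitian complex matrix, and define M(x) = cosh(√λ·(x−b))·I + (1/√λ)·sinh(√λ·(x−b))·F_b for x ≥ b, where I is the N×N identity matrix. Let v ∈ ℂ^N with F_b·v = μ·v for some μ ∈ ℝ, and let x ≥ b be such that M(x) is invertible. Then M'(x)·M(x)^{−1}·v = f(x,μ)·v, where f(x,μ) = √λ·(√λ·tanh(√λ·(x−b)) + μ)/(√λ + μ·tanh(√λ·(x−b))). -/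
open MeasureTheory Set Matrix

/-!
On `[b, ∞)` the matrix `M` lies in the commutative algebra `span {1, F_b}`, and so does `M'`:
`M' = √λ sinh · 1 + cosh · F_b`. Both therefore act on an eigenvector `v` of `F_b` by scalars,
`cosh + sinh μ / √λ` and `√λ sinh + cosh μ`, and `M'M⁻¹ v` is `v` times their quotient, which is
`f(x, μ)` after dividing numerator and denominator by `cosh`.
-/

/-- Entrywise derivative (within `Ici b`) of a matrix-valued function on the
half-line `[b,∞)`. -/
noncomputable def mderivFrom {N : ℕ} (b : ℝ) (M : ℝ → Matrix (Fin N) (Fin N) ℂ) :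
    ℝ → Matrix (Fin N) (Fin N) ℂ :=
  fun x => Matrix.of fun i j => derivWithin (fun t => M t i j) (Ici b) x

/-- The scalar eigenvalue branch
`f(x,μ) = √λ (√λ tanh(√λ(x-b)) + μ) / (√λ + μ tanh(√λ(x-b)))`. -/
noncomputable def branch (lam b x μ : ℝ) : ℝ :=
  Real.sqrt lam * (Real.sqrt lam * Real.tanh (Real.sqrt lam * (x - b)) + μ)
    / (Real.sqrt lam + μ * Real.tanh (Real.sqrt lam * (x - b)))

namespace Matrix

variable {n K : Type*} [Fintype n] [DecidableEq n]

theorem smul_one_add_smul_mulVec_of_mulVec_eq_smul [CommRing K] {F : Matrix n n K}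
    {v : n → K} {μ : K} (hv : F *ᵥ v = μ • v) (c s : K) :
    (c • (1 : Matrix n n K) + s • F) *ᵥ v = (c + s * μ) • v := by
  rw [add_mulVec, smul_mulVec, smul_mulVec, one_mulVec, hv, smul_smul, add_smul]

theorem inv_mulVec_of_mulVec_eq_smul [Field K] {A : Matrix n n K} (hA : IsUnit A)
    {v : n → K} {κ : K} (hv : A *ᵥ v = κ • v) : A⁻¹ *ᵥ v = κ⁻¹ • v := by
  have hcancel : A⁻¹ *ᵥ (A *ᵥ v) = v := by
    rw [mulVec_mulVec, nonsing_inv_mul _ ((isUnit_iff_isUnit_det A).mp hA), one_mulVec]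
  rcases eq_or_ne κ 0 with rfl | hκ
  · rw [hv, zero_smul, mulVec_zero] at hcancel
    rw [← hcancel, mulVec_zero, smul_zero]
  · rw [hv, mulVec_smul] at hcancel
    calc A⁻¹ *ᵥ v = κ⁻¹ • (κ • A⁻¹ *ᵥ v) := by rw [smul_smul, inv_mul_cancel₀ hκ, one_smul]
      _ = κ⁻¹ • v := by rw [hcancel]

end Matrix

theorem mderivFrom_eq_smul_one_add_smul {N : ℕ} {b x : ℝ} (hx : b ≤ x)
    {M : ℝ → Matrix (Fin N) (Fin N) ℂ} {F : Matrix (Fin N) (Fin N) ℂ} {C S : ℝ → ℝ}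
    {c s : ℝ} (hM : ∀ t ≥ b, M t = (C t : ℂ) • (1 : Matrix (Fin N) (Fin N) ℂ) + (S t : ℂ) • F)
    (hC : HasDerivAt C c x) (hS : HasDerivAt S s x) :
    mderivFrom b M x = (c : ℂ) • (1 : Matrix (Fin N) (Fin N) ℂ) + (s : ℂ) • F := by
  ext i j
  have hEq : EqOn (fun t => M t i j)
      (fun t => (C t : ℂ) * (1 : Matrix (Fin N) (Fin N) ℂ) i j + (S t : ℂ) * F i j) (Ici b) :=
    fun t ht => by simp [hM t ht]
  have hD : HasDerivWithinAt
      (fun t => (C t : ℂ) * (1 : Matrix (Fin N) (Fin N) ℂ) i j + (S t : ℂ) * F i j)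
      ((c : ℂ) * (1 : Matrix (Fin N) (Fin N) ℂ) i j + (s : ℂ) * F i j) (Ici b) x :=
    ((hC.ofReal_comp.mul_const _).add (hS.ofReal_comp.mul_const _)).hasDerivWithinAt
  rw [mderivFrom, of_apply, derivWithin_congr hEq (hEq (mem_Ici.mpr hx)),
    hD.derivWithin (uniqueDiffOn_Ici b x (mem_Ici.mpr hx))]
  simp

section HyperbolicBranch

variable {a b : ℝ}

theorem hasDerivAt_cosh_mul_sub (x : ℝ) :
    HasDerivAt (fun t => Real.cosh (a * (t - b))) (a * Real.sinh (a * (x - b))) x := by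
  simpa [mul_comm] using (((hasDerivAt_id x).sub_const b).const_mul a).cosh

theorem hasDerivAt_inv_mul_sinh_mul_sub (ha : a ≠ 0) (x : ℝ) :
    HasDerivAt (fun t => a⁻¹ * Real.sinh (a * (t - b))) (Real.cosh (a * (x - b))) x := by
  simpa [inv_mul_cancel_left₀ ha, mul_comm] using
    ((((hasDerivAt_id x).sub_const b).const_mul a).sinh).const_mul a⁻¹

theorem branch_eq_div {lam : ℝ} (hlam : 0 < lam) (b x μ : ℝ) :
    branch lam b x μ =
      (Real.sqrt lam * Real.sinh (Real.sqrt lam * (x - b)) + Real.cosh (Real.sqrt lam * (x - b)) * μ)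
        / (Real.cosh (Real.sqrt lam * (x - b))
          + (Real.sqrt lam)⁻¹ * Real.sinh (Real.sqrt lam * (x - b)) * μ) := by
  have ha : Real.sqrt lam ≠ 0 := (Real.sqrt_pos.mpr hlam).ne'
  have hch := (Real.cosh_pos (Real.sqrt lam * (x - b))).ne'
  rw [branch, Real.tanh_eq_sinh_div_cosh]
  field_simp

end HyperbolicBranch

theorem stmt_12_general (N : ℕ)
    (lam : ℝ) (hlam : 0 < lam) (b : ℝ)
    (Fb : Matrix (Fin N) (Fin N) ℂ)
    (M : ℝ → Matrix (Fin N) (Fin N) ℂ)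
    (hM : ∀ x ≥ b,
      M x = (Real.cosh (Real.sqrt lam * (x - b)) : ℂ) • (1 : Matrix (Fin N) (Fin N) ℂ)
        + (((Real.sqrt lam)⁻¹ * Real.sinh (Real.sqrt lam * (x - b)) : ℝ) : ℂ) • Fb)
    (v : Fin N → ℂ) (μ : ℝ) (hv : Fb *ᵥ v = (μ : ℂ) • v)
    (x : ℝ) (hx : b ≤ x) (hinv : IsUnit (M x)) :
    (mderivFrom b M x * (M x)⁻¹) *ᵥ v = (branch lam b x μ : ℂ) • v := by
  have ha : Real.sqrt lam ≠ 0 := (Real.sqrt_pos.mpr hlam).ne'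
  have hMv := hM x hx ▸ smul_one_add_smul_mulVec_of_mulVec_eq_smul hv _ _
  have hM' := mderivFrom_eq_smul_one_add_smul hx hM (hasDerivAt_cosh_mul_sub x)
    (hasDerivAt_inv_mul_sinh_mul_sub ha x)
  rw [← mulVec_mulVec, inv_mulVec_of_mulVec_eq_smul hinv hMv, mulVec_smul, hM',
    smul_one_add_smul_mulVec_of_mulVec_eq_smul hv, smul_smul, inv_mul_eq_div,
    branch_eq_div hlam]
  push_cast
  rfl

theorem stmt_12 (N : ℕ) (hN : 1 ≤ N)
    (lam : ℝ) (hlam : 0 < lam) (b : ℝ) (hb : 0 ≤ b)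
    (Fb : Matrix (Fin N) (Fin N) ℂ) (hFb : Fb.IsHermitian)
    (M : ℝ → Matrix (Fin N) (Fin N) ℂ)
    (hM : ∀ x ≥ b,
      M x = (Real.cosh (Real.sqrt lam * (x - b)) : ℂ) • (1 : Matrix (Fin N) (Fin N) ℂ)
        + (((Real.sqrt lam)⁻¹ * Real.sinh (Real.sqrt lam * (x - b)) : ℝ) : ℂ) • Fb)
    (v : Fin N → ℂ) (μ : ℝ) (hv : Fb *ᵥ v = (μ : ℂ) • v)
    (x : ℝ) (hx : b ≤ x) (hinv : IsUnit (M x)) :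
    (mderivFrom b M x * (M x)⁻¹) *ᵥ v = (branch lam b x μ : ℂ) • v :=
  stmt_12_general N lam hlam b Fb M hM v μ hv x hx hinv
end

section
/- Let N ≥ 1, λ > 0, b ≥ 0, let F_b be an N×N Hermitian complex matrix, and let ν ∈ ℂ^N be nonzero. Define φ_ν(x) = cosh(√λ·(x−b))·ν + (1/√λ)·sinh(√λ·(x−b))·F_b·ν for x ≥ b. Then ∫_b^∞ ‖φ_ν(x)‖² dx < ∞ if and only if F_b·ν = −√λ·ν; moreover, if F_b·ν = −√λ·ν then φ_ν(x) = e^{−√λ·(x−b)}·ν for all x ≥ b. -/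
/-!
Writing `t = √λ (x - b)`, the solution splits as
`φ_ν = eᵗ/2 • (ν + F_b ν/√λ) + e⁻ᵗ/2 • (ν - F_b ν/√λ)`.
If the growing coefficient `ν + F_b ν/√λ` is nonzero, `‖φ_ν‖` tends to infinity and `‖φ_ν‖²` cannot be
integrable on a half-line; if it vanishes, `φ_ν = e⁻ᵗ • ν` decays exponentially.
-/

open MeasureTheory Set Filter Real

section
variable {E : Type*} [NormedAddCommGroup E] [NormedSpace ℝ E]

theorem cosh_smul_add_sinh_smul (t : ℝ) (v w : E) :
    cosh t • v + sinh t • w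
      = exp t • ((2 : ℝ)⁻¹ • (v + w)) + exp (-t) • ((2 : ℝ)⁻¹ • (v - w)) := by
  rw [cosh_eq, sinh_eq]
  module

theorem tendsto_norm_exp_smul_add_exp_neg_smul {a : E} (ha : a ≠ 0) (c : E) :
    Tendsto (fun t => ‖exp t • a + exp (-t) • c‖) atTop atTop := by
  have hlow : ∀ᶠ t in atTop, exp t * ‖a‖ + -‖c‖ ≤ ‖exp t • a + exp (-t) • c‖ := by
    filter_upwards [eventually_ge_atTop 0] with t ht
    have hc : exp (-t) * ‖c‖ ≤ ‖c‖ :=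
      mul_le_of_le_one_left (norm_nonneg _) (exp_le_one_iff.2 (by linarith))
    calc exp t * ‖a‖ + -‖c‖ ≤ ‖exp t • a‖ - ‖exp (-t) • c‖ := by
          rw [norm_smul, norm_smul, norm_of_nonneg (exp_pos _).le,
            norm_of_nonneg (exp_pos _).le]
          linarith
      _ ≤ ‖exp t • a + exp (-t) • c‖ := norm_sub_le_norm_add _ _
  exact tendsto_atTop_mono' _ hlow
    ((tendsto_exp_atTop.atTop_mul_const (norm_pos_iff.2 ha)).atTop_add tendsto_const_nhds)

theorem cosh_smul_add_sinh_smul_of_eq_neg {s : ℝ} (hs : s ≠ 0) (t : ℝ) {v w : E}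
    (hw : w = -s • v) :
    cosh (s * t) • v + (s⁻¹ * sinh (s * t)) • w = exp (-s * t) • v := by
  rw [hw, smul_smul, ← add_smul, neg_mul, ← cosh_sub_sinh]
  congr 1
  field_simp
  ring

theorem tendsto_norm_cosh_smul_add_inv_mul_sinh_smul {s : ℝ} (hs : 0 < s) (b : ℝ) {v w : E}
    (hw : w ≠ -s • v) :
    Tendsto (fun x => ‖cosh (s * (x - b)) • v + (s⁻¹ * sinh (s * (x - b))) • w‖)
      atTop atTop := by
  have hvw : v + s⁻¹ • w ≠ 0 := by
    contrapose! hw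
    calc w = s • (s⁻¹ • w) := by rw [smul_smul, mul_inv_cancel₀ hs.ne', one_smul]
      _ = -s • v := by rw [eq_neg_of_add_eq_zero_right hw, smul_neg, neg_smul]
  have hlin : Tendsto (fun x => s * (x - b)) atTop atTop :=
    (tendsto_atTop_add_const_right _ (-b) tendsto_id).const_mul_atTop hs
  have hu : (2 : ℝ)⁻¹ • (v + s⁻¹ • w) ≠ 0 := smul_ne_zero (by norm_num) hvw
  convert (tendsto_norm_exp_smul_add_exp_neg_smul hu ((2 : ℝ)⁻¹ • (v - s⁻¹ • w))).comp hlin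
    using 2 with x
  rw [Function.comp_apply, ← cosh_smul_add_sinh_smul, mul_comm s⁻¹, mul_smul]

theorem integrableOn_sq_norm_exp_smul {s : ℝ} (hs : 0 < s) (b : ℝ) (v : E) :
    IntegrableOn (fun x => ‖exp (-s * (x - b)) • v‖ ^ 2) (Ioi b) := by
  have hsq : ∀ x, ‖exp (-s * (x - b)) • v‖ ^ 2
      = exp (2 * s * b) * ‖v‖ ^ 2 * exp (-(2 * s) * x) := by
    intro x
    rw [norm_smul, norm_of_nonneg (exp_pos _).le, mul_pow, ← exp_nat_mul,
      mul_right_comm, ← exp_add]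
    ring_nf
  simp only [hsq]
  exact (integrableOn_exp_mul_Ioi (by linarith) b).const_mul _

end

theorem not_integrableOn_Ioi_of_tendsto_atTop {g : ℝ → ℝ} (hg : Tendsto g atTop atTop) (b : ℝ) :
    ¬ IntegrableOn g (Ioi b) := by
  intro hint
  obtain ⟨M, hM⟩ := eventually_atTop.1 (hg.eventually_ge_atTop 1)
  have hsub : Ioi (max b M) ⊆ {x | 1 ≤ ‖g x‖} ∩ Ioi b := fun x hx =>
    ⟨(hM x (le_of_max_le_right hx.le)).trans (le_abs_self _), (le_max_left b M).trans_lt hx⟩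
  exact ((measure_mono hsub).trans (Measure.le_restrict_apply _ _) |>.trans_lt
    (hint.measure_norm_ge_lt_top one_pos)).ne volume_Ioi

theorem stmt_15_general (N : ℕ)
    (lam : ℝ) (hlam : 0 < lam) (b : ℝ)
    (Fb : Matrix (Fin N) (Fin N) ℂ)
    (ν : EuclideanSpace ℂ (Fin N))
    (φ : ℝ → EuclideanSpace ℂ (Fin N))
    (hφ : ∀ x ≥ b,
      φ x = (Real.cosh (Real.sqrt lam * (x - b)) : ℂ) • ν
        + (((Real.sqrt lam)⁻¹ * Real.sinh (Real.sqrt lam * (x - b)) : ℝ) : ℂ)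
            • Matrix.toEuclideanLin Fb ν) :
    (IntegrableOn (fun x => ‖φ x‖ ^ 2) (Ioi b)
      ↔ Matrix.toEuclideanLin Fb ν = (-(Real.sqrt lam) : ℂ) • ν)
    ∧ (Matrix.toEuclideanLin Fb ν = (-(Real.sqrt lam) : ℂ) • ν →
        ∀ x ≥ b, φ x = (Real.exp (-(Real.sqrt lam) * (x - b)) : ℂ) • ν) := by
  set s := √lam
  have hs : 0 < s := sqrt_pos.2 hlam
  set w := Matrix.toEuclideanLin Fb ν
  simp only [neg_smul, Complex.coe_smul] at hφ ⊢
  rw [← neg_smul]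
  have hexp : w = -s • ν → ∀ x ≥ b, φ x = exp (-s * (x - b)) • ν := fun h x hx =>
    (hφ x hx).trans (cosh_smul_add_sinh_smul_of_eq_neg hs.ne' _ h)
  refine ⟨⟨fun hint => ?_, fun h => ?_⟩, hexp⟩
  · by_contra hw
    refine not_integrableOn_Ioi_of_tendsto_atTop ?_ b hint
    refine (tendsto_pow_atTop two_ne_zero).comp
      ((tendsto_norm_cosh_smul_add_inv_mul_sinh_smul hs b hw).congr' ?_)
    filter_upwards [eventually_ge_atTop b] with x hx
    rw [hφ x hx]
  · exact (integrableOn_sq_norm_exp_smul hs b ν).congr_fun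
      (fun x hx => by rw [hexp h x (le_of_lt hx)]) measurableSet_Ioi

theorem stmt_15 (N : ℕ) (hN : 1 ≤ N)
    (lam : ℝ) (hlam : 0 < lam) (b : ℝ) (hb : 0 ≤ b)
    (Fb : Matrix (Fin N) (Fin N) ℂ) (hFb : Fb.IsHermitian)
    (ν : EuclideanSpace ℂ (Fin N)) (hν : ν ≠ 0)
    (φ : ℝ → EuclideanSpace ℂ (Fin N))
    (hφ : ∀ x ≥ b,
      φ x = (Real.cosh (Real.sqrt lam * (x - b)) : ℂ) • ν
        + (((Real.sqrt lam)⁻¹ * Real.sinh (Real.sqrt lam * (x - b)) : ℝ) : ℂ)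
            • Matrix.toEuclideanLin Fb ν) :
    (IntegrableOn (fun x => ‖φ x‖ ^ 2) (Ioi b)
      ↔ Matrix.toEuclideanLin Fb ν = (-(Real.sqrt lam) : ℂ) • ν)
    ∧ (Matrix.toEuclideanLin Fb ν = (-(Real.sqrt lam) : ℂ) • ν →
        ∀ x ≥ b, φ x = (Real.exp (-(Real.sqrt lam) * (x - b)) : ℂ) • ν) :=
  stmt_15_general N lam hlam b Fb ν φ hφ
end
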